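/- Let f : ℝⁿ → ℝ be convex and differentiable with L-Lipschitz gradient, h : ℝⁿ → ℝ convex, and φ = f + h. For θ ∈ (0,1], points x_t, z_t, z_{t+1} ∈ ℝⁿ, set y = (1-θ)x_t + θz_t and x_{t+1} = (1-θ)x_t + θz_{t+1}. Then φ(x_{t+1}) ≤ (1-θ)φ(x_t) + θ(f(y) + ⟨z_{t+1} - y, ∇f(y)⟩ + h(z_{t+1})) + θ²(L/2)‖z_{t+1} - z_t‖². -/
import Mathlib

open RealInnerProductSpace

section aux

variable {n : ℕ}

local notation "E" => EuclideanSpace ℝ (Fin n)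

/-- derivative of f along a line -/
lemma line_hasDerivAt (f : E → ℝ) (f' : E → E)
    (hgrad : ∀ x, HasGradientAt f (f' x) x) (a v : E) (t : ℝ) :
    HasDerivAt (fun s : ℝ => f (a + s • v)) ⟪v, f' (a + t • v)⟫ t := by
  have hc : HasDerivAt (fun s : ℝ => a + s • v) v t := by
    simpa using ((hasDerivAt_id t).smul_const v).const_add a
  have hf := (hgrad (a + t • v)).hasFDerivAt
  have h2 : (InnerProductSpace.toDual ℝ (EuclideanSpace ℝ (Fin n)) (f' (a + t • v))) v
      = ⟪v, f' (a + t • v)⟫ := by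
    rw [InnerProductSpace.toDual_apply_apply, real_inner_comm]
  have h3 := hf.comp_hasDerivAt t hc
  rw [h2] at h3
  exact h3

/-- first-order convexity inequality -/
lemma convex_grad_ineq (f : E → ℝ) (f' : E → E)
    (hfconv : ConvexOn ℝ Set.univ f)
    (hgrad : ∀ x, HasGradientAt f (f' x) x) (a b : E) :
    f a + ⟪b - a, f' a⟫ ≤ f b := by
  set g : ℝ → ℝ := fun s => f (a + s • (b - a)) with hg
  have hgc : ConvexOn ℝ Set.univ g := by
    have : g = f ∘ (AffineMap.lineMap a b : ℝ →ᵃ[ℝ] E) := by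
      funext s
      simp [hg, AffineMap.lineMap_apply, add_comm]
    rw [this]
    have := hfconv.comp_affineMap (AffineMap.lineMap a b : ℝ →ᵃ[ℝ] E)
    simpa using this
  have hd0 : HasDerivAt g ⟪b - a, f' a⟫ 0 := by
    have := line_hasDerivAt f f' hgrad a (b - a) 0
    rw [show a + (0:ℝ) • (b - a) = a by simp] at this
    exact this
  have := hgc.le_slope_of_hasDerivAt (Set.mem_univ (0:ℝ)) (Set.mem_univ (1:ℝ))
    one_pos hd0
  have hslope : slope g 0 1 = f b - f a := by
    simp only [slope, hg, one_smul, zero_smul, add_zero, add_sub_cancel, sub_zero, div_one,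
      vsub_eq_sub, inv_one, one_smul]
  rw [hslope] at this
  linarith

/-- descent lemma -/
lemma descent_lemma (f : E → ℝ) (f' : E → E)
    (hgrad : ∀ x, HasGradientAt f (f' x) x)
    (L : ℝ) (hL : 0 ≤ L)
    (hLip : ∀ x y, ‖f' x - f' y‖ ≤ L * ‖x - y‖) (a b : E) :
    f b ≤ f a + ⟪b - a, f' a⟫ + L / 2 * ‖b - a‖ ^ 2 := by
  set v := b - a with hv
  set g' : ℝ → ℝ := fun t => ⟪v, f' (a + t • v)⟫ with hg'
  have hderiv : ∀ t ∈ Set.uIcc (0:ℝ) 1,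
      HasDerivAt (fun s : ℝ => f (a + s • v)) (g' t) t :=
    fun t _ => line_hasDerivAt f f' hgrad a v t
  have hf'cont : Continuous f' := by
    refine (LipschitzWith.of_dist_le_mul (K := L.toNNReal) (f := f') ?_).continuous
    intro x y
    calc dist (f' x) (f' y) = ‖f' x - f' y‖ := dist_eq_norm _ _
      _ ≤ L * ‖x - y‖ := hLip x y
      _ ≤ L.toNNReal * dist x y := by
          rw [dist_eq_norm]
          gcongr
          exact Real.le_coe_toNNReal L
  have hcont : Continuous g' := by
    apply Continuous.inner continuous_const
    exact hf'cont.comp (continuous_const.add (continuous_id.smul continuous_const))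
  have hFTC := intervalIntegral.integral_eq_sub_of_hasDerivAt hderiv
    (hcont.intervalIntegrable 0 1)
  have hbound : ∀ t ∈ Set.Icc (0:ℝ) 1, g' t ≤ g' 0 + L * t * ‖v‖ ^ 2 := by
    intro t ht
    have h1 : g' t - g' 0 = ⟪v, f' (a + t • v) - f' a⟫ := by
      simp only [hg', zero_smul, add_zero, inner_sub_right]
    have h2 : ⟪v, f' (a + t • v) - f' a⟫ ≤ ‖v‖ * ‖f' (a + t • v) - f' a‖ :=
      real_inner_le_norm _ _
    have h3 : ‖f' (a + t • v) - f' a‖ ≤ L * (t * ‖v‖) := by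
      have := hLip (a + t • v) a
      simpa [norm_smul, abs_of_nonneg ht.1] using this
    nlinarith [norm_nonneg v, ht.1, mul_le_mul_of_nonneg_left h3 (norm_nonneg v)]
  have hint : ∫ t in (0:ℝ)..1, g' t ≤ ∫ t in (0:ℝ)..1, (g' 0 + L * t * ‖v‖ ^ 2) := by
    apply intervalIntegral.integral_mono_on zero_le_one
      (hcont.intervalIntegrable 0 1)
      ((by fun_prop : Continuous fun t : ℝ => g' 0 + L * t * ‖v‖ ^ 2).intervalIntegrable 0 1)
    exact hbound
  have hint2 : ∫ t in (0:ℝ)..1, (g' 0 + L * t * ‖v‖ ^ 2)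
      = g' 0 + L / 2 * ‖v‖ ^ 2 := by
    rw [intervalIntegral.integral_add (continuous_const.intervalIntegrable 0 1)
      ((by fun_prop : Continuous fun t : ℝ => L * t * ‖v‖ ^ 2).intervalIntegrable 0 1)]
    have : ∫ t in (0:ℝ)..1, L * t * ‖v‖ ^ 2
        = (L * ‖v‖ ^ 2) * ∫ t in (0:ℝ)..1, t := by
      rw [← intervalIntegral.integral_const_mul]
      congr 1; funext t; ring
    rw [this, integral_id]
    norm_num
    ring
  have hab : f b - f a = ∫ t in (0:ℝ)..1, g' t := by
    rw [show a + (1:ℝ) • v = b by simp [hv], show a + (0:ℝ) • v = a by simp] at hFTC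
    exact hFTC.symm
  have : g' 0 = ⟪b - a, f' a⟫ := by
    simp only [hg', zero_smul, add_zero, hv]
  linarith [hint.trans_eq hint2]

end aux

/-- Per-iteration descent bound: with y = (1-θ)x_t + θz_t and x_{t+1} = (1-θ)x_t + θz_{t+1},
    φ(x_{t+1}) ≤ (1-θ)φ(x_t) + θ(f(y) + ⟨z_{t+1}-y, ∇f(y)⟩ + h(z_{t+1})) + θ²(L/2)‖z_{t+1}-z_t‖². -/
theorem stmt_12 (n : ℕ) (f h : EuclideanSpace ℝ (Fin n) → ℝ)
    (f' : EuclideanSpace ℝ (Fin n) → EuclideanSpace ℝ (Fin n))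
    (hfconv : ConvexOn ℝ Set.univ f)
    (hgrad : ∀ x, HasGradientAt f (f' x) x)
    (L : ℝ) (hL : 0 ≤ L)
    (hLip : ∀ x y, ‖f' x - f' y‖ ≤ L * ‖x - y‖)
    (hhconv : ConvexOn ℝ Set.univ h)
    (θ : ℝ) (hθ0 : 0 < θ) (hθ1 : θ ≤ 1)
    (xt zt zt1 y xt1 : EuclideanSpace ℝ (Fin n))
    (hy : y = (1 - θ) • xt + θ • zt)
    (hx : xt1 = (1 - θ) • xt + θ • zt1) :
    f xt1 + h xt1 ≤ (1 - θ) * (f xt + h xt)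
      + θ * (f y + ⟪zt1 - y, f' y⟫ + h zt1) + θ ^ 2 * (L / 2) * ‖zt1 - zt‖ ^ 2 := by
  have hdiff : xt1 - y = θ • (zt1 - zt) := by
    rw [hx, hy]; module
  -- descent lemma at y
  have hdes : f xt1 ≤ f y + ⟪xt1 - y, f' y⟫ + L / 2 * ‖xt1 - y‖ ^ 2 :=
    descent_lemma f f' hgrad L hL hLip y xt1
  have hnorm : ‖xt1 - y‖ ^ 2 = θ ^ 2 * ‖zt1 - zt‖ ^ 2 := by
    rw [hdiff, norm_smul, Real.norm_eq_abs, abs_of_pos hθ0, mul_pow]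
  -- convexity of f at y vs xt
  have hconvf : f y + ⟪xt - y, f' y⟫ ≤ f xt :=
    convex_grad_ineq f f' hfconv hgrad y xt
  -- convexity of h
  have hconvh : h xt1 ≤ (1 - θ) * h xt + θ * h zt1 := by
    rw [hx]
    exact hhconv.2 (Set.mem_univ xt) (Set.mem_univ zt1) (by linarith) hθ0.le (by ring)
  -- inner product decomposition
  have hinner : ⟪xt1 - y, f' y⟫ = θ * ⟪zt1 - y, f' y⟫ + (1 - θ) * ⟪xt - y, f' y⟫ := by
    have : xt1 - y = θ • (zt1 - y) + (1 - θ) • (xt - y) := by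
      rw [hx, hy]; module
    rw [this, inner_add_left, real_inner_smul_left, real_inner_smul_left]
  have hθ' : (0:ℝ) ≤ 1 - θ := by linarith
  nlinarith [mul_le_mul_of_nonneg_left hconvf hθ', sq_nonneg (‖zt1 - zt‖), mul_nonneg hL (sq_nonneg ‖zt1 - zt‖)]
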